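/- Let v ∈ ℂ² ⊗ ℂ² be a two-qubit unit vector with density matrix ψ = v vᴴ, let e₀ ∈ ℂ² be the first standard basis vector (the ancilla state |0⟩), and let C be a Clifford unitary on the three-qubit space (ℂ² ⊗ ℂ²) ⊗ ℂ². Suppose C (v ⊗ e₀) = w ⊗ u for unit vectors w ∈ ℂ² ⊗ ℂ² and u ∈ ℂ², and suppose M₂(u uᴴ) > M₂ᴸ(ψ). Then there exist no 2×2 unitaries U_A, U_B with w wᴴ = (U_A ⊗ U_B) ψ (U_A ⊗ U_B)ᴴ; in fact M₂(w wᴴ) < M₂ᴺᴸ(ψ). -/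

import Mathlib

noncomputable section
open Matrix Kronecker

/-- The four single-qubit Pauli matrices I, X, Y, Z. -/
def pauli : Fin 4 → Matrix (Fin 2) (Fin 2) ℂ :=
  ![1, !![0, 1; 1, 0], !![0, -Complex.I; Complex.I, 0], !![1, 0; 0, -1]]

/-- Two-qubit Pauli strings σ₁ ⊗ σ₂. -/
def pauli2 (a : Fin 4 × Fin 4) : Matrix (Fin 2 × Fin 2) (Fin 2 × Fin 2) ℂ :=
  pauli a.1 ⊗ₖ pauli a.2

/-- Three-qubit Pauli strings (σ₁ ⊗ σ₂) ⊗ σ₃. -/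
def pauli3 (a : Fin 4 × Fin 4 × Fin 4) :
    Matrix ((Fin 2 × Fin 2) × Fin 2) ((Fin 2 × Fin 2) × Fin 2) ℂ :=
  (pauli a.1 ⊗ₖ pauli a.2.1) ⊗ₖ pauli a.2.2

/-- Rank-one density matrix v vᴴ. -/
def dm {ι : Type*} (v : ι → ℂ) : Matrix ι ι ℂ := Matrix.vecMulVec v (star v)

/-- Stabilizer 2-Rényi entropy of a single-qubit state. -/
def M2one (ψ : Matrix (Fin 2) (Fin 2) ℂ) : ℝ :=
  - Real.logb 2 ((1 / 2) * ∑ a : Fin 4, ‖(pauli a * ψ).trace‖ ^ 4)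

/-- Stabilizer 2-Rényi entropy of a two-qubit state. -/
def M2two (ψ : Matrix (Fin 2 × Fin 2) (Fin 2 × Fin 2) ℂ) : ℝ :=
  - Real.logb 2 ((1 / 4) * ∑ a : Fin 4 × Fin 4, ‖(pauli2 a * ψ).trace‖ ^ 4)

/-- Non-local magic: infimum of stabilizer entropy over local unitary orbits. -/
def M2NL (ψ : Matrix (Fin 2 × Fin 2) (Fin 2 × Fin 2) ℂ) : ℝ :=
  ⨅ U : Matrix.unitaryGroup (Fin 2) ℂ × Matrix.unitaryGroup (Fin 2) ℂ,
    M2two (((U.1 : Matrix (Fin 2) (Fin 2) ℂ) ⊗ₖ (U.2 : Matrix (Fin 2) (Fin 2) ℂ)) * ψ *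
      ((U.1 : Matrix (Fin 2) (Fin 2) ℂ) ⊗ₖ (U.2 : Matrix (Fin 2) (Fin 2) ℂ))ᴴ)

/-- Local magic: total magic minus non-local magic. -/
def M2L (ψ : Matrix (Fin 2 × Fin 2) (Fin 2 × Fin 2) ℂ) : ℝ := M2two ψ - M2NL ψ

/-- A unitary on three qubits is Clifford if it maps every Pauli string
to a Pauli string up to a sign. -/
def IsClifford3 (C : Matrix ((Fin 2 × Fin 2) × Fin 2) ((Fin 2 × Fin 2) × Fin 2) ℂ) : Prop :=
  C ∈ Matrix.unitaryGroup ((Fin 2 × Fin 2) × Fin 2) ℂ ∧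
    ∀ a : Fin 4 × Fin 4 × Fin 4, ∃ (b : Fin 4 × Fin 4 × Fin 4) (s : ℝ),
      (s = 1 ∨ s = -1) ∧ C * pauli3 a * Cᴴ = (s : ℂ) • pauli3 b

/-- Tensor (Kronecker) product of vectors. -/
def tens {α β : Type*} (v : α → ℂ) (w : β → ℂ) : α × β → ℂ := fun p => v p.1 * w p.2

/-- The ancilla state |0⟩, first standard basis vector of ℂ². -/
def e0 : Fin 2 → ℂ := fun i => if i = 0 then 1 else 0

/-!
Conjugation by a Clifford unitary permutes the Pauli strings up to sign, so it preserves the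
quartic Pauli sum `∑_P |Tr(P ψ)|⁴`, and this sum is multiplicative on product states.
Since the ancilla `|0⟩` is a stabilizer state, `C (v ⊗ |0⟩) = w ⊗ u` therefore gives
`M₂(w) + M₂(u) = M₂(v)`, i.e. `M₂(w) = M₂(v) - M₂(u) < M₂(v) - M₂ᴸ(v) = M₂ᴺᴸ(v)`.
A local-unitary image of `v` would have magic at least `M₂ᴺᴸ(v)`.
-/

section

variable {ι : Type*} [Fintype ι]

lemma dm_mulVec (M : Matrix ι ι ℂ) (x : ι → ℂ) : dm (M *ᵥ x) = M * dm x * Mᴴ := by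
  rw [dm, dm, vecMulVec_eq (Fin 1), vecMulVec_eq (Fin 1), star_mulVec, replicateCol_mulVec,
    replicateRow_vecMul]
  simp only [Matrix.mul_assoc]

lemma trace_dm (x : ι → ℂ) : (dm x).trace = ((∑ i, Complex.normSq (x i) : ℝ) : ℂ) := by
  simp [dm, trace, vecMulVec, Complex.mul_conj]

lemma norm_apply_le_one_of_sum_normSq_eq_one {x : ι → ℂ} (hx : ∑ i, Complex.normSq (x i) = 1)
    (i : ι) : ‖x i‖ ≤ 1 := by
  have h : Complex.normSq (x i) ≤ 1 :=
    hx ▸ Finset.single_le_sum (fun j _ => Complex.normSq_nonneg (x j)) (Finset.mem_univ i)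
  rw [Complex.normSq_eq_norm_sq] at h
  nlinarith [norm_nonneg (x i)]

lemma norm_dm_apply_le_one {x : ι → ℂ} (hx : ∑ i, Complex.normSq (x i) = 1) (i j : ι) :
    ‖dm x i j‖ ≤ 1 := by
  rw [dm, vecMulVec_apply, norm_mul, Pi.star_apply, norm_star]
  exact mul_le_one₀ (norm_apply_le_one_of_sum_normSq_eq_one hx i) (norm_nonneg _)
    (norm_apply_le_one_of_sum_normSq_eq_one hx j)

lemma trace_conj_mul_conj [DecidableEq ι] {U : Matrix ι ι ℂ} (hU : Uᴴ * U = 1)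
    (A B : Matrix ι ι ℂ) : (U * A * Uᴴ * (U * B * Uᴴ)).trace = (A * B).trace := by
  have h : U * A * Uᴴ * (U * B * Uᴴ) = U * (A * B * Uᴴ) := by
    simp only [Matrix.mul_assoc, ← Matrix.mul_assoc Uᴴ U, hU, one_mul]
  rw [h, trace_mul_comm, Matrix.mul_assoc, hU, mul_one]

lemma norm_trace_mul_le_of_norm_apply_le_one {A B : Matrix ι ι ℂ}
    (hA : ∀ i j, ‖A i j‖ ≤ 1) (hB : ∀ i j, ‖B i j‖ ≤ 1) :
    ‖(A * B).trace‖ ≤ Fintype.card ι ^ 2 := by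
  calc ‖(A * B).trace‖ = ‖∑ i, ∑ j, A i j * B j i‖ := by simp only [trace, diag, mul_apply]
    _ ≤ ∑ i, ∑ j, ‖A i j * B j i‖ :=
      (norm_sum_le _ _).trans (Finset.sum_le_sum fun i _ => norm_sum_le _ _)
    _ ≤ ∑ _i : ι, ∑ _j : ι, (1 : ℝ) := Finset.sum_le_sum fun i _ => Finset.sum_le_sum fun j _ => by
      rw [norm_mul]; exact mul_le_one₀ (hA i j) (norm_nonneg _) (hB j i)
    _ = Fintype.card ι ^ 2 := by simp [sq]

lemma sum_normSq_mulVec_of_conjTranspose_mul_self [DecidableEq ι] {U : Matrix ι ι ℂ}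
    (hU : Uᴴ * U = 1) (x : ι → ℂ) :
    ∑ i, Complex.normSq ((U *ᵥ x) i) = ∑ i, Complex.normSq (x i) := by
  apply Complex.ofReal_injective
  rw [← trace_dm, ← trace_dm, dm_mulVec, trace_mul_cycle, hU, one_mul]

end

lemma dm_tens {α β : Type*} (x : α → ℂ) (y : β → ℂ) : dm (tens x y) = dm x ⊗ₖ dm y := by
  ext ⟨i, k⟩ ⟨j, l⟩
  simp only [dm, tens, vecMulVec_apply, kroneckerMap_apply, Pi.star_apply, star_mul']
  ring

lemma trace_pauli_mul_pauli (a b : Fin 4) :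
    (pauli a * pauli b).trace = if a = b then 2 else 0 := by
  fin_cases a <;> fin_cases b <;>
    simp [pauli, trace_fin_two] <;> norm_num

lemma norm_pauli_apply_le_one (a : Fin 4) (i j : Fin 2) : ‖pauli a i j‖ ≤ 1 := by
  fin_cases a <;> fin_cases i <;> fin_cases j <;> simp [pauli, one_apply]

lemma norm_pauli2_apply_le_one (a : Fin 4 × Fin 4) (i j : Fin 2 × Fin 2) :
    ‖pauli2 a i j‖ ≤ 1 := by
  rw [pauli2, kroneckerMap_apply, norm_mul]
  exact mul_le_one₀ (norm_pauli_apply_le_one _ _ _) (norm_nonneg _)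
    (norm_pauli_apply_le_one _ _ _)

lemma trace_pauli3_mul_pauli3 (a b : Fin 4 × Fin 4 × Fin 4) :
    (pauli3 a * pauli3 b).trace = if a = b then 8 else 0 := by
  obtain ⟨a₁, a₂, a₃⟩ := a
  obtain ⟨b₁, b₂, b₃⟩ := b
  rw [pauli3, pauli3, ← mul_kronecker_mul, ← mul_kronecker_mul, trace_kronecker,
    trace_kronecker, trace_pauli_mul_pauli, trace_pauli_mul_pauli, trace_pauli_mul_pauli]
  simp only [Prod.mk.injEq]
  split_ifs <;> simp_all
  norm_num

lemma eq_of_pauli3_eq_smul {a b : Fin 4 × Fin 4 × Fin 4} {s : ℂ}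
    (h : pauli3 a = s • pauli3 b) : a = b := by
  by_contra hab
  have h8 : (pauli3 a * pauli3 a).trace = 8 := by simp [trace_pauli3_mul_pauli3]
  nth_rewrite 1 [h] at h8
  rw [smul_mul, trace_smul, trace_pauli3_mul_pauli3, if_neg (Ne.symm hab)] at h8
  norm_num at h8

lemma pauli3_eq_pauli2_kronecker (p : Fin 4 × Fin 4) (c : Fin 4) :
    pauli3 (p.1, p.2, c) = pauli2 p ⊗ₖ pauli c := rfl

def quarticPauliSum1 (ψ : Matrix (Fin 2) (Fin 2) ℂ) : ℝ :=
  ∑ a : Fin 4, ‖(pauli a * ψ).trace‖ ^ 4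

def quarticPauliSum2 (ψ : Matrix (Fin 2 × Fin 2) (Fin 2 × Fin 2) ℂ) : ℝ :=
  ∑ a : Fin 4 × Fin 4, ‖(pauli2 a * ψ).trace‖ ^ 4

def quarticPauliSum3 (ψ : Matrix ((Fin 2 × Fin 2) × Fin 2) ((Fin 2 × Fin 2) × Fin 2) ℂ) : ℝ :=
  ∑ a : Fin 4 × Fin 4 × Fin 4, ‖(pauli3 a * ψ).trace‖ ^ 4

lemma M2one_eq_neg_logb (ψ : Matrix (Fin 2) (Fin 2) ℂ) :
    M2one ψ = -Real.logb 2 (quarticPauliSum1 ψ / 2) := by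
  rw [M2one, quarticPauliSum1, one_div_mul_eq_div]

lemma M2two_eq_neg_logb (ψ : Matrix (Fin 2 × Fin 2) (Fin 2 × Fin 2) ℂ) :
    M2two ψ = -Real.logb 2 (quarticPauliSum2 ψ / 4) := by
  rw [M2two, quarticPauliSum2, one_div_mul_eq_div]

lemma quarticPauliSum3_kronecker (ρ : Matrix (Fin 2 × Fin 2) (Fin 2 × Fin 2) ℂ)
    (σ : Matrix (Fin 2) (Fin 2) ℂ) :
    quarticPauliSum3 (ρ ⊗ₖ σ) = quarticPauliSum2 ρ * quarticPauliSum1 σ := by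
  rw [quarticPauliSum3, ← (Equiv.prodAssoc _ _ _).sum_comp, Fintype.sum_prod_type,
    quarticPauliSum2, quarticPauliSum1, Finset.sum_mul_sum]
  refine Finset.sum_congr rfl fun p _ => Finset.sum_congr rfl fun c _ => ?_
  rw [Equiv.prodAssoc_apply, pauli3_eq_pauli2_kronecker, ← mul_kronecker_mul, trace_kronecker,
    norm_mul, mul_pow]

lemma quarticPauliSum3_conj_of_isClifford3
    {C : Matrix ((Fin 2 × Fin 2) × Fin 2) ((Fin 2 × Fin 2) × Fin 2) ℂ} (hC : IsClifford3 C)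
    (ψ : Matrix ((Fin 2 × Fin 2) × Fin 2) ((Fin 2 × Fin 2) × Fin 2) ℂ) :
    quarticPauliSum3 (C * ψ * Cᴴ) = quarticPauliSum3 ψ := by
  obtain ⟨hCu, hcl⟩ := hC
  have hCC : Cᴴ * C = 1 := mem_unitaryGroup_iff'.mp hCu
  choose f s hs hfs using hcl
  have hss : ∀ a, (s a : ℂ) * s a = 1 := fun a => by rcases hs a with h | h <;> simp [h]
  have hf : ∀ a, pauli3 (f a) = (s a : ℂ) • (C * pauli3 a * Cᴴ) := fun a => by
    rw [hfs a, smul_smul, hss, one_smul]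
  have hconj : ∀ A B, C * A * Cᴴ = C * B * Cᴴ → A = B := fun A B h => by
    simpa [Matrix.mul_assoc, ← Matrix.mul_assoc Cᴴ C, hCC] using congr_arg (Cᴴ * · * C) h
  have hinj : Function.Injective f := fun a b hab => by
    refine eq_of_pauli3_eq_smul (s := s a * s b) (hconj _ _ ?_)
    rw [hfs a, Matrix.mul_smul, Matrix.smul_mul, ← smul_smul, ← hf b, hab]
  rw [quarticPauliSum3, quarticPauliSum3, ← (Finite.injective_iff_bijective.mp hinj).sum_comp]
  refine Finset.sum_congr rfl fun a _ => ?_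
  rw [hf, smul_mul, trace_smul, trace_conj_mul_conj hCC, smul_eq_mul, norm_mul,
    Complex.norm_real, Real.norm_eq_abs]
  rcases hs a with h | h <;> simp [h]

lemma quarticPauliSum1_dm_e0 : quarticPauliSum1 (dm e0) = 2 := by
  simp [quarticPauliSum1, Fin.sum_univ_four, pauli, dm, e0, vecMulVec, trace, mul_apply]
  norm_num

lemma quarticPauliSum2_dm_le {x : Fin 2 × Fin 2 → ℂ} (hx : ∑ i, Complex.normSq (x i) = 1) :
    quarticPauliSum2 (dm x) ≤ 2 ^ 20 := by
  calc quarticPauliSum2 (dm x)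
        ≤ ∑ _a : Fin 4 × Fin 4, ((Fintype.card (Fin 2 × Fin 2) : ℝ) ^ 2) ^ 4 :=
        Finset.sum_le_sum fun a _ => pow_le_pow_left₀ (norm_nonneg _)
          (norm_trace_mul_le_of_norm_apply_le_one (norm_pauli2_apply_le_one a)
            (norm_dm_apply_le_one hx)) 4
    _ = 2 ^ 20 := by norm_num

lemma one_le_quarticPauliSum2 {ψ : Matrix (Fin 2 × Fin 2) (Fin 2 × Fin 2) ℂ} (h : ψ.trace = 1) :
    1 ≤ quarticPauliSum2 ψ := by
  calc (1 : ℝ) = ‖(pauli2 (0, 0) * ψ).trace‖ ^ 4 := by simp [pauli2, pauli, h]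
    _ ≤ quarticPauliSum2 ψ :=
      Finset.single_le_sum (f := fun a => ‖(pauli2 a * ψ).trace‖ ^ 4) (fun _ _ => by positivity)
        (Finset.mem_univ _)

lemma neg_eighteen_le_M2two_dm {x : Fin 2 × Fin 2 → ℂ} (hx : ∑ i, Complex.normSq (x i) = 1) :
    -18 ≤ M2two (dm x) := by
  have hpos : 0 < quarticPauliSum2 (dm x) / 4 :=
    div_pos (one_pos.trans_le (one_le_quarticPauliSum2 (by rw [trace_dm, hx]; simp)))
      four_pos
  have hle : quarticPauliSum2 (dm x) / 4 ≤ 2 ^ (18 : ℝ) := by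
    linarith [quarticPauliSum2_dm_le hx]
  rw [M2two_eq_neg_logb, neg_le_neg_iff]
  exact (Real.logb_le_iff_le_rpow one_lt_two hpos).mpr hle

-- Over `ℝ`, `⨅` of a set that is not bounded below is `0`, so the crude bound `M₂ ≥ -18` is needed.
lemma M2NL_dm_le {v : Fin 2 × Fin 2 → ℂ} (hv : ∑ i, Complex.normSq (v i) = 1)
    {UA UB : Matrix (Fin 2) (Fin 2) ℂ} (hUA : UA ∈ unitaryGroup (Fin 2) ℂ)
    (hUB : UB ∈ unitaryGroup (Fin 2) ℂ) :
    M2NL (dm v) ≤ M2two ((UA ⊗ₖ UB) * dm v * (UA ⊗ₖ UB)ᴴ) := by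
  refine ciInf_le ?_ ((⟨UA, hUA⟩, ⟨UB, hUB⟩) : unitaryGroup (Fin 2) ℂ × unitaryGroup (Fin 2) ℂ)
  refine ⟨-18, ?_⟩
  rintro _ ⟨⟨U₁, U₂⟩, rfl⟩
  have hK : ((U₁ : Matrix (Fin 2) (Fin 2) ℂ) ⊗ₖ (U₂ : Matrix (Fin 2) (Fin 2) ℂ))ᴴ *
      ((U₁ : Matrix (Fin 2) (Fin 2) ℂ) ⊗ₖ (U₂ : Matrix (Fin 2) (Fin 2) ℂ)) = 1 :=
    (kronecker_mem_unitary U₁.2 U₂.2).1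
  dsimp only
  rw [← dm_mulVec]
  exact neg_eighteen_le_M2two_dm ((sum_normSq_mulVec_of_conjTranspose_mul_self hK v).trans hv)

lemma M2two_add_M2one_of_isClifford3 {v w : Fin 2 × Fin 2 → ℂ} {u : Fin 2 → ℂ}
    (hv : ∑ i, Complex.normSq (v i) = 1)
    {C : Matrix ((Fin 2 × Fin 2) × Fin 2) ((Fin 2 × Fin 2) × Fin 2) ℂ} (hC : IsClifford3 C)
    (hact : C *ᵥ tens v e0 = tens w u) :
    M2two (dm w) + M2one (dm u) = M2two (dm v) := by
  have key : quarticPauliSum2 (dm w) * quarticPauliSum1 (dm u) = quarticPauliSum2 (dm v) * 2 := by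
    rw [← quarticPauliSum3_kronecker, ← dm_tens, ← hact, dm_mulVec,
      quarticPauliSum3_conj_of_isClifford3 hC, dm_tens, quarticPauliSum3_kronecker,
      quarticPauliSum1_dm_e0]
  have hne : quarticPauliSum2 (dm w) * quarticPauliSum1 (dm u) ≠ 0 := by
    rw [key]
    linarith [one_le_quarticPauliSum2 (ψ := dm v) (by rw [trace_dm, hv]; simp)]
  rw [M2two_eq_neg_logb, M2one_eq_neg_logb, M2two_eq_neg_logb, ← neg_add,
    ← Real.logb_mul (by simpa using left_ne_zero_of_mul hne)
      (by simpa using right_ne_zero_of_mul hne)]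
  congr 2
  linear_combination key / 8

theorem local_magic_distillation_general
    (v w : Fin 2 × Fin 2 → ℂ) (u : Fin 2 → ℂ)
    (hv : ∑ i, Complex.normSq (v i) = 1)
    (C : Matrix ((Fin 2 × Fin 2) × Fin 2) ((Fin 2 × Fin 2) × Fin 2) ℂ)
    (hC : IsClifford3 C)
    (hact : C.mulVec (tens v e0) = tens w u)
    (hmagic : M2one (dm u) > M2L (dm v)) :
    (¬ ∃ (UA UB : Matrix (Fin 2) (Fin 2) ℂ),
        UA ∈ Matrix.unitaryGroup (Fin 2) ℂ ∧ UB ∈ Matrix.unitaryGroup (Fin 2) ℂ ∧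
        dm w = (UA ⊗ₖ UB) * dm v * (UA ⊗ₖ UB)ᴴ) ∧
      M2two (dm w) < M2NL (dm v) := by
  have hadd := M2two_add_M2one_of_isClifford3 hv hC hact
  have hlt : M2two (dm w) < M2NL (dm v) := by
    rw [M2L] at hmagic
    linarith
  refine ⟨?_, hlt⟩
  rintro ⟨UA, UB, hUA, hUB, hw⟩
  rw [hw] at hlt
  exact (M2NL_dm_le hv hUA hUB).not_gt hlt

theorem local_magic_distillation
    (v w : Fin 2 × Fin 2 → ℂ) (u : Fin 2 → ℂ)
    (hv : ∑ i, Complex.normSq (v i) = 1)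
    (hw : ∑ i, Complex.normSq (w i) = 1)
    (hu : ∑ i, Complex.normSq (u i) = 1)
    (C : Matrix ((Fin 2 × Fin 2) × Fin 2) ((Fin 2 × Fin 2) × Fin 2) ℂ)
    (hC : IsClifford3 C)
    (hact : C.mulVec (tens v e0) = tens w u)
    (hmagic : M2one (dm u) > M2L (dm v)) :
    (¬ ∃ (UA UB : Matrix (Fin 2) (Fin 2) ℂ),
        UA ∈ Matrix.unitaryGroup (Fin 2) ℂ ∧ UB ∈ Matrix.unitaryGroup (Fin 2) ℂ ∧
        dm w = (UA ⊗ₖ UB) * dm v * (UA ⊗ₖ UB)ᴴ) ∧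
      M2two (dm w) < M2NL (dm v) :=
  local_magic_distillation_general v w u hv C hC hact hmagic
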